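/- Let I = (𝒳, 𝒞) be an instance of 23SAT without bad pairs (and with every variable appearing in some clause). Then the associated graph G_I contains no cycle of length 6 as a subgraph. -/

import Mathlib

variable {V : Type*}

/-- `S` is an independent set of `G`. -/
def IndepSet (G : SimpleGraph V) (S : Set V) : Prop :=
  ∀ ⦃a⦄, a ∈ S → ∀ ⦃b⦄, b ∈ S → ¬ G.Adj a b

/-- The closed neighborhood `N[S]` of a set of vertices. -/
def ClosedNbhd (G : SimpleGraph V) (S : Set V) : Set V :=
  S ∪ {u | ∃ s ∈ S, G.Adj s u}

/-- `N₂(v)`: vertices at distance exactly 2 from `v`. -/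
def N2 (G : SimpleGraph V) (v : V) : Set V := {u | G.dist v u = 2}

/-- `G` contains a cycle of length `k` as a (not necessarily induced) subgraph. -/
def CycleLen (G : SimpleGraph V) (k : ℕ) : Prop :=
  ∃ f : ZMod k → V, Function.Injective f ∧ ∀ i : ZMod k, G.Adj (f i) (f (i + 1))

/-- A literal: a variable together with a polarity. -/
structure Lit (α : Type*) where
  var : α
  pos : Bool
deriving DecidableEq

/-- The negation of a literal. -/
def Lit.neg {α : Type*} (l : Lit α) : Lit α := ⟨l.var, !l.pos⟩

/-- Evaluation of a literal under a truth assignment. -/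
def Lit.eval {α : Type*} (t : α → Bool) (l : Lit α) : Bool :=
  if l.pos then t l.var else !(t l.var)

/-- Vertices of the graph `G_I`: the center `v`, clause vertices `w_j`,
and literal vertices `u_i` (`(i, true)`) and `u_i'` (`(i, false)`). -/
abbrev GIVert (n m : ℕ) := Unit ⊕ Fin m ⊕ (Fin n × Bool)

/-- The graph `G_I` associated with a SAT instance with `n` variables and `m` clauses. -/
def GI {n m : ℕ} (C : Fin m → Finset (Lit (Fin n))) : SimpleGraph (GIVert n m) :=
  SimpleGraph.fromRel (fun a b =>
    match a, b with
    | Sum.inl _, Sum.inr (Sum.inl _) => True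
    | Sum.inr (Sum.inl j), Sum.inr (Sum.inr (i, p)) => (⟨i, p⟩ : Lit (Fin n)) ∈ C j
    | Sum.inr (Sum.inr (i, p)), Sum.inr (Sum.inr (i', p')) => i = i' ∧ p ≠ p'
    | _, _ => False)

/-- The center vertex `v` of `G_I`. -/
def centerV {n m : ℕ} : GIVert n m := Sum.inl ()

/-- The literal vertex `u_i` (for `b = true`) or `u_i'` (for `b = false`). -/
def litV {n m : ℕ} (i : Fin n) (b : Bool) : GIVert n m := Sum.inr (Sum.inr (i, b))

section helpers
variable {n m : ℕ} {C : Fin m → Finset (Lit (Fin n))}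

lemma adj_center' {x : GIVert n m} (h : (GI C).Adj (Sum.inl ()) x) :
    ∃ j, x = Sum.inr (Sum.inl j) := by
  rcases x with u | j | ⟨i, p⟩
  · cases u; exact absurd h ((GI C).loopless.irrefl _)
  · exact ⟨j, rfl⟩
  · rw [GI, SimpleGraph.fromRel_adj] at h
    rcases h.2 with h | h <;> exact h.elim

lemma adj_w' {j : Fin m} {x : GIVert n m} (h : (GI C).Adj (Sum.inr (Sum.inl j)) x) :
    x = Sum.inl () ∨ ∃ i p, x = Sum.inr (Sum.inr (i, p)) ∧ (⟨i, p⟩ : Lit (Fin n)) ∈ C j := by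
  rcases x with u | j' | ⟨i, p⟩
  · cases u; exact Or.inl rfl
  · rw [GI, SimpleGraph.fromRel_adj] at h
    rcases h.2 with h | h <;> exact h.elim
  · rw [GI, SimpleGraph.fromRel_adj] at h
    rcases h.2 with h | h
    · exact Or.inr ⟨i, p, rfl, h⟩
    · exact h.elim

lemma adj_u' {i : Fin n} {p : Bool} {x : GIVert n m}
    (h : (GI C).Adj (Sum.inr (Sum.inr (i, p))) x) :
    (∃ j, x = Sum.inr (Sum.inl j) ∧ (⟨i, p⟩ : Lit (Fin n)) ∈ C j)
      ∨ x = Sum.inr (Sum.inr (i, !p)) := by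
  rcases x with u | j | ⟨i', p'⟩
  · cases u
    rw [GI, SimpleGraph.fromRel_adj] at h
    rcases h.2 with h | h <;> exact h.elim
  · rw [GI, SimpleGraph.fromRel_adj] at h
    rcases h.2 with h | h
    · exact h.elim
    · exact Or.inl ⟨j, rfl, h⟩
  · rw [GI, SimpleGraph.fromRel_adj] at h
    rcases h.2 with h | h
    · obtain ⟨rfl, hp⟩ := h
      have : p' = !p := by cases p <;> cases p' <;> simp_all
      simp [this]
    · obtain ⟨he, hp⟩ := h
      subst he
      have : p' = !p := by cases p <;> cases p' <;> simp_all
      simp [this]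

lemma key
    (twoMaj : ∀ {a b c : Fin m} {l1 l2 : Lit (Fin n)}, a ≠ b → b ≠ c → l1 ≠ l2 →
      l1 ∈ C a → l1 ∈ C b → l2 ∈ C b → l2 ∈ C c → False)
    (badp : ∀ {a b : Fin m} {l1 l2 : Lit (Fin n)}, a ≠ b → l1 ≠ l2 →
      l1 ∈ C a → l2 ∈ C a → l1.neg ∈ C b → l2.neg ∈ C b → False)
    (f : ZMod 6 → GIVert n m) (finj : Function.Injective f)
    (hadj : ∀ i, (GI C).Adj (f i) (f (i + 1)))
    (j0 : Fin m) (hf0 : f 0 = Sum.inr (Sum.inl j0)) : False := by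
  have nef : ∀ a b : ZMod 6, a ≠ b → f a ≠ f b := fun a b hab h => hab (finj h)
  have hne_w : ∀ {a b : ZMod 6} {ja jb : Fin m}, f a = Sum.inr (Sum.inl ja) →
      f b = Sum.inr (Sum.inl jb) → a ≠ b → ja ≠ jb := by
    intro a b ja jb ha hb hab h
    exact nef a b hab (by rw [ha, hb, h])
  have hne_u : ∀ {a b : ZMod 6} {ia ib : Fin n} {pa pb : Bool},
      f a = Sum.inr (Sum.inr (ia, pa)) → f b = Sum.inr (Sum.inr (ib, pb)) → a ≠ b →
      (⟨ia, pa⟩ : Lit (Fin n)) ≠ ⟨ib, pb⟩ := by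
    intro a b ia ib pa pb ha hb hab h
    injection h with h1 h2
    exact nef a b hab (by rw [ha, hb, h1, h2])
  have h0 := hadj 0
  have h1 := hadj 1
  have h2 := hadj 2
  have h3 := hadj 3
  have h4 := hadj 4
  have h5 := hadj 5
  rw [show (0:ZMod 6)+1 = 1 by decide] at h0
  rw [show (1:ZMod 6)+1 = 2 by decide] at h1
  rw [show (2:ZMod 6)+1 = 3 by decide] at h2
  rw [show (3:ZMod 6)+1 = 4 by decide] at h3
  rw [show (4:ZMod 6)+1 = 5 by decide] at h4
  rw [show (5:ZMod 6)+1 = 0 by decide] at h5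
  rw [hf0] at h0 h5
  rcases adj_w' h0 with hf1 | ⟨i1, p1, hf1, m01⟩
  · -- f1 = center
    rw [hf1] at h1
    obtain ⟨j2, hf2⟩ := adj_center' h1
    rw [hf2] at h2
    rcases adj_w' h2 with hf3 | ⟨i3, p3, hf3, m23⟩
    · exact nef 1 3 (by decide) (hf1.trans hf3.symm)
    · rw [hf3] at h3
      rcases adj_u' h3 with ⟨j4, hf4, m43⟩ | hf4
      · rw [hf4] at h4
        rcases adj_w' h4 with hf5 | ⟨i5, p5, hf5, m45⟩
        · exact nef 1 5 (by decide) (hf1.trans hf5.symm)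
        · rw [hf5] at h5
          rcases adj_u' h5 with ⟨j, hj, m50⟩ | hpair
          · obtain rfl : j0 = j := by simpa using hj
            exact twoMaj (hne_w hf2 hf4 (by decide)) (hne_w hf4 hf0 (by decide))
              (hne_u hf3 hf5 (by decide)) m23 m43 m45 m50
          · simp at hpair
      · rw [hf4] at h4
        rcases adj_u' h4 with ⟨j5, hf5, _⟩ | hf5
        · rw [hf5] at h5
          rcases adj_w' h5 with hc | ⟨_, _, hc, _⟩ <;> simp at hc
        · rw [Bool.not_not] at hf5
          exact nef 3 5 (by decide) (hf3.trans hf5.symm)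
  · -- f1 = u (i1,p1), m01 : l1 ∈ C j0
    rw [hf1] at h1
    rcases adj_u' h1 with ⟨j2, hf2, m12⟩ | hf2
    · rw [hf2] at h2
      rcases adj_w' h2 with hf3 | ⟨i3, p3, hf3, m23⟩
      · -- f3 = center
        rw [hf3] at h3
        obtain ⟨j4, hf4⟩ := adj_center' h3
        rw [hf4] at h4
        rcases adj_w' h4 with hf5 | ⟨i5, p5, hf5, m45⟩
        · exact nef 3 5 (by decide) (hf3.trans hf5.symm)
        · rw [hf5] at h5
          rcases adj_u' h5 with ⟨j, hj, m50⟩ | hpair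
          · obtain rfl : j0 = j := by simpa using hj
            exact twoMaj (hne_w hf2 hf0 (by decide)) (hne_w hf0 hf4 (by decide))
              (hne_u hf1 hf5 (by decide)) m12 m01 m50 m45
          · simp at hpair
      · -- f3 = u (i3,p3) ∈ C j2
        rw [hf3] at h3
        rcases adj_u' h3 with ⟨j4, hf4, m34⟩ | hf4
        · exact twoMaj (hne_w hf0 hf2 (by decide)) (hne_w hf2 hf4 (by decide))
            (hne_u hf1 hf3 (by decide)) m01 m12 m23 m34
        · rw [hf4] at h4
          rcases adj_u' h4 with ⟨j5, hf5, _⟩ | hf5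
          · rw [hf5] at h5
            rcases adj_w' h5 with hc | ⟨_, _, hc, _⟩ <;> simp at hc
          · rw [Bool.not_not] at hf5
            exact nef 3 5 (by decide) (hf3.trans hf5.symm)
    · -- f2 = u (i1, !p1)
      rw [hf2] at h2
      rcases adj_u' h2 with ⟨j3, hf3, m3⟩ | hf3
      · rw [hf3] at h3
        rcases adj_w' h3 with hf4 | ⟨i4, p4, hf4, m34⟩
        · rw [hf4] at h4
          obtain ⟨j5, hf5⟩ := adj_center' h4
          rw [hf5] at h5
          rcases adj_w' h5 with hc | ⟨_, _, hc, _⟩ <;> simp at hc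
        · rw [hf4] at h4
          rcases adj_u' h4 with ⟨j5, hf5, _⟩ | hf5
          · rw [hf5] at h5
            rcases adj_w' h5 with hc | ⟨_, _, hc, _⟩ <;> simp at hc
          · -- f5 = u (i4, !p4)
            rw [hf5] at h5
            rcases adj_u' h5 with ⟨j, hj, m50⟩ | hpair
            · obtain rfl : j0 = j := by simpa using hj
              have hi : i1 ≠ i4 := by
                intro h
                subst h
                cases p1 <;> cases p4
                · exact nef 1 4 (by decide) (hf1.trans hf4.symm)
                · exact nef 2 4 (by decide) (hf2.trans hf4.symm)
                · exact nef 2 4 (by decide) (hf2.trans hf4.symm)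
                · exact nef 1 4 (by decide) (hf1.trans hf4.symm)
              refine badp (hne_w hf0 hf3 (by decide))
                (fun h => hi (congrArg Lit.var h)) m01 m50 m3 ?_
              simpa [Lit.neg] using m34
            · simp at hpair
      · rw [Bool.not_not] at hf3
        exact nef 1 3 (by decide) (hf1.trans hf3.symm)

end helpers

/-- If `I` is a 23SAT instance without bad pairs (with distinct clauses and every
variable appearing in some clause), then `G_I` contains no cycle of length 6. -/
theorem GI_no_C6 {n m : ℕ} (C : Fin m → Finset (Lit (Fin n)))
    (hInj : Function.Injective C)
    (hsize : ∀ j : Fin m, (C j).card = 2 ∨ (C j).card = 3)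
    (hcons : ∀ j : Fin m, ∀ l ∈ C j, l.neg ∉ C j)
    (hmaj : ∀ j : Fin m, ∀ l₁ ∈ C j, ∀ l₂ ∈ C j,
      (∃ j₁ j₂ : Fin m, j₁ ≠ j₂ ∧ l₁ ∈ C j₁ ∧ l₁ ∈ C j₂) →
      (∃ j₁ j₂ : Fin m, j₁ ≠ j₂ ∧ l₂ ∈ C j₁ ∧ l₂ ∈ C j₂) → l₁ = l₂)
    (hbad : ¬ ∃ j₁ j₂ : Fin m, ∃ l₁ l₂ : Lit (Fin n), j₁ ≠ j₂ ∧ l₁ ≠ l₂ ∧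
      l₁ ∈ C j₁ ∧ l₂ ∈ C j₁ ∧ l₁.neg ∈ C j₂ ∧ l₂.neg ∈ C j₂)
    (happ : ∀ i : Fin n, ∃ j : Fin m, ∃ b : Bool, (⟨i, b⟩ : Lit (Fin n)) ∈ C j) :
    ¬ CycleLen (GI C) 6 := by
  rintro ⟨f, finj, hadj⟩
  have twoMaj : ∀ {a b c : Fin m} {l1 l2 : Lit (Fin n)}, a ≠ b → b ≠ c → l1 ≠ l2 →
      l1 ∈ C a → l1 ∈ C b → l2 ∈ C b → l2 ∈ C c → False := by
    intro a b c l1 l2 hab hbc hl m1a m1b m2b m2c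
    exact hl (hmaj b l1 m1b l2 m2b ⟨a, b, hab, m1a, m1b⟩ ⟨b, c, hbc, m2b, m2c⟩)
  have badp : ∀ {a b : Fin m} {l1 l2 : Lit (Fin n)}, a ≠ b → l1 ≠ l2 →
      l1 ∈ C a → l2 ∈ C a → l1.neg ∈ C b → l2.neg ∈ C b → False := by
    intro a b l1 l2 hab hl m1 m2 m3 m4
    exact hbad ⟨a, b, l1, l2, hab, hl, m1, m2, m3, m4⟩
  have main : ∀ r : ZMod 6, ∀ j, f r = Sum.inr (Sum.inl j) → False := by
    intro r j hr
    refine key twoMaj badp (fun i => f (i + r))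
      (fun a b h => add_right_cancel (finj h)) (fun i => ?_) j ?_
    · have := hadj (i + r)
      rwa [show i + r + 1 = i + 1 + r by ring] at this
    · show f (0 + r) = _
      rwa [zero_add]
  rcases h0 : f 0 with u | j | ⟨i, p⟩
  · cases u
    have := hadj 0
    rw [h0] at this
    obtain ⟨j, hj⟩ := adj_center' this
    exact main (0 + 1) j hj
  · exact main 0 j h0
  · have := hadj 0
    rw [h0] at this
    rcases adj_u' this with ⟨j, hj, _⟩ | hpair
    · exact main (0 + 1) j hj
    · have h1 := hadj (0 + 1)
      rw [hpair] at h1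
      rcases adj_u' h1 with ⟨j, hj, _⟩ | hpair2
      · exact main (0 + 1 + 1) j hj
      · rw [Bool.not_not] at hpair2
        exact absurd (finj (hpair2.trans h0.symm)) (by decide)
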